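/- Let X be a metric space, P a Borel probability measure on X, and f : X → Y a function into a metric space Y that is continuous at a point x̃ in the support of P. If x₁, x₂, … are i.i.d. samples from P and x̃_S(n) is a nearest sample to x̃ among the first n, then f(x̃_S(n)) converges to f(x̃) almost surely as n → ∞. -/

import Mathlib

open MeasureTheory Metric ProbabilityTheory Filter

/-!
Fix `δ > 0`. The events `{x i ∈ closedBall xt δ}` are independent and all have the same
positive probability, so by the second Borel–Cantelli lemma almost surely some sample lands
within `δ` of `xt`. Intersecting over `δ = 1 / (k + 1)`, almost surely `xt` lies in the
closure of the samples, and then the nearest of the first `n + 1` samples converges to `xt`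
because once a sample within `ε` has been drawn, every later nearest sample is within `ε`.
Continuity of `f` at `xt` finishes the argument.
-/

theorem Filter.Tendsto.of_dist_le_of_mem_closure_range {X : Type*} [PseudoMetricSpace X]
    {a : X} {x sel : ℕ → X} (ha : a ∈ closure (Set.range x))
    (hsel : ∀ n, ∀ i ≤ n, dist (sel n) a ≤ dist (x i) a) :
    Tendsto sel atTop (nhds a) := by
  refine Metric.tendsto_atTop.2 fun ε hε => ?_
  obtain ⟨i, hi⟩ := Metric.mem_closure_range_iff.1 ha ε hε
  exact ⟨i, fun n hn => (hsel n i hn).trans_lt (dist_comm a (x i) ▸ hi)⟩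

namespace ProbabilityTheory

variable {Ω E : Type*} [MeasurableSpace Ω] [MeasurableSpace E] {μ : Measure Ω} {P : Measure E}
  {x : ℕ → Ω → E}

theorem iIndepFun.ae_frequently_mem (hmeas : ∀ i, Measurable (x i)) (hindep : iIndepFun x μ)
    (hdist : ∀ i, μ.map (x i) = P) {s : Set E} (hs : MeasurableSet s) (hPs : P s ≠ 0) :
    ∀ᵐ ω ∂μ, ∃ᶠ i in atTop, x i ω ∈ s := by
  have hpre : ∀ i, μ (x i ⁻¹' s) = P s := fun i => by
    rw [← hdist i, Measure.map_apply (hmeas i) hs]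
  have hindep_sets : iIndepSet (fun i => x i ⁻¹' s) μ :=
    (iIndepSet_iff_meas_biInter fun i => hmeas i hs).2 fun S =>
      hindep.meas_biInter fun i _ => ⟨s, hs, rfl⟩
  have := hindep_sets.isProbabilityMeasure
  have hlimsup : μ (limsup (fun i => x i ⁻¹' s) atTop) = 1 :=
    measure_limsup_eq_one (fun i => hmeas i hs) hindep_sets
      (by simp_rw [hpre]; exact ENNReal.tsum_const_eq_top_of_ne_zero hPs)
  have hmeas_limsup : MeasurableSet (limsup (fun i => x i ⁻¹' s) atTop) :=
    MeasurableSet.measurableSet_limsup fun i => hmeas i hs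
  filter_upwards [(ae_mem_iff_measure_eq hmeas_limsup.nullMeasurableSet).2
    (hlimsup.trans measure_univ.symm)] with ω hω
  exact mem_limsup_iff_frequently_mem.1 hω

theorem iIndepFun.ae_mem_closure_range [PseudoMetricSpace E] [BorelSpace E]
    (hmeas : ∀ i, Measurable (x i)) (hindep : iIndepFun x μ) (hdist : ∀ i, μ.map (x i) = P)
    {a : E} (hsupp : ∀ δ : ℝ, 0 < δ → 0 < P (closedBall a δ)) :
    ∀ᵐ ω ∂μ, a ∈ closure (Set.range fun i => x i ω) := by
  have hhit : ∀ᵐ ω ∂μ, ∀ k : ℕ, ∃ i, x i ω ∈ closedBall a (1 / (k + 1)) := by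
    refine ae_all_iff.2 fun k => ?_
    filter_upwards [hindep.ae_frequently_mem hmeas hdist measurableSet_closedBall
      (hsupp _ Nat.one_div_pos_of_nat).ne'] with ω hω
    exact hω.exists
  filter_upwards [hhit] with ω hω
  refine Metric.mem_closure_range_iff.2 fun ε hε => ?_
  obtain ⟨k, hk⟩ := exists_nat_one_div_lt hε
  obtain ⟨i, hi⟩ := hω k
  exact ⟨i, (mem_closedBall'.1 hi).trans_lt hk⟩

end ProbabilityTheory

theorem image_of_nearest_clone_tendsto_general
    {X : Type*} [MetricSpace X] [MeasurableSpace X] [BorelSpace X]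
    {Y : Type*} [MetricSpace Y]
    {Ω : Type*} [MeasurableSpace Ω] (μ : Measure Ω)
    (P : Measure X) (xt : X)
    (hsupp : ∀ δ : ℝ, 0 < δ → 0 < P (closedBall xt δ))
    (f : X → Y) (hf : ContinuousAt f xt)
    (x : ℕ → Ω → X) (hmeas : ∀ i, Measurable (x i))
    (hindep : iIndepFun x μ)
    (hdist : ∀ i, Measure.map (x i) μ = P)
    (sel : ℕ → Ω → X)
    (hsel_min : ∀ n ω, ∀ i ≤ n, dist (sel n ω) xt ≤ dist (x i ω) xt) :
    ∀ᵐ ω ∂μ, Tendsto (fun n => f (sel n ω)) atTop (nhds (f xt)) := by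
  filter_upwards [hindep.ae_mem_closure_range hmeas hdist hsupp] with ω hω
  exact hf.tendsto.comp (.of_dist_le_of_mem_closure_range hω (hsel_min · ω))

/-- If `f : X → Y` is continuous at a point `xt` in the support of `P`, and
`sel n ω` is a nearest sample to `xt` among the first `n + 1` i.i.d. samples,
then `f (sel n ω)` converges to `f xt` almost surely. -/
theorem image_of_nearest_clone_tendsto
    {X : Type*} [MetricSpace X] [MeasurableSpace X] [BorelSpace X]
    {Y : Type*} [MetricSpace Y]
    {Ω : Type*} [MeasurableSpace Ω] (μ : Measure Ω) [IsProbabilityMeasure μ]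
    (P : Measure X) [IsProbabilityMeasure P] (xt : X)
    (hsupp : ∀ δ : ℝ, 0 < δ → 0 < P (closedBall xt δ))
    (f : X → Y) (hf : ContinuousAt f xt)
    (x : ℕ → Ω → X) (hmeas : ∀ i, Measurable (x i))
    (hindep : iIndepFun x μ)
    (hdist : ∀ i, Measure.map (x i) μ = P)
    (sel : ℕ → Ω → X)
    (hsel_mem : ∀ n ω, ∃ i ≤ n, sel n ω = x i ω)
    (hsel_min : ∀ n ω, ∀ i ≤ n, dist (sel n ω) xt ≤ dist (x i ω) xt) :
    ∀ᵐ ω ∂μ, Tendsto (fun n => f (sel n ω)) atTop (nhds (f xt)) :=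
  image_of_nearest_clone_tendsto_general μ P xt hsupp f hf x hmeas hindep hdist sel hsel_min
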